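/- The surrogate u σ(u) with σ(u) = 1/(1+e^{-u}) satisfies: E_q[g(x)σ(g(x))] ≤ 0 and g bounded implies E_q[max(g(x),0)] ≤ E_q[|g(x)|σ(-|g(x)|)] ≤ sup_{t≥0} t/(1+e^t); more precisely E_q[[g]_+] = E_q[gσ(g)] + E_q[|g|σ(-|g|)], so a zero surrogate expectation bounds the true expected violation by E_q[|g|σ(-|g|)]. -/

import Mathlib

/-!
Pointwise, `[u]₊ = u σ(u) + |u| σ(-|u|)`; integrating this identity gives the decomposition,
from which the first bound is immediate. The second holds because `|g| σ(-|g|)` takes its values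
in `{t / (1 + eᵗ) | t ≥ 0}`, a set bounded above by `1` since `eᵗ ≥ 1 + t`.
-/

open MeasureTheory Real

lemma max_zero_eq_mul_sigmoid_add_abs_mul_sigmoid_neg_abs (u : ℝ) :
    max u 0 = u * (1 / (1 + exp (-u))) + |u| * (1 / (1 + exp |u|)) := by
  rcases le_or_gt 0 u with h | h
  · rw [abs_of_nonneg h, max_eq_left h, exp_neg]
    field_simp
    ring
  · rw [abs_of_neg h, max_eq_right h.le, exp_neg]
    field_simp
    ring

lemma norm_one_div_one_add_exp_le_one (u : ℝ) : ‖1 / (1 + exp u)‖ ≤ 1 := by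
  rw [norm_of_nonneg (by positivity), div_le_one (by positivity)]
  linarith [exp_pos u]

lemma div_one_add_exp_le_one (t : ℝ) : t / (1 + exp t) ≤ 1 := by
  rw [div_le_one (by positivity)]
  linarith [add_one_le_exp t]

section Integral

variable {α : Type*} [MeasurableSpace α] {μ : Measure α}

lemma MeasureTheory.Integrable.mul_one_div_one_add_exp {f h : α → ℝ} (hf : Integrable f μ)
    (hh : AEStronglyMeasurable h μ) :
    Integrable (fun x => f x * (1 / (1 + exp (h x)))) μ :=
  hf.mul_bdd
    ((show Continuous fun u : ℝ => 1 / (1 + exp u) from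
      continuous_const.div (by fun_prop) fun u => by positivity).comp_aestronglyMeasurable hh)
    (Filter.Eventually.of_forall fun x => norm_one_div_one_add_exp_le_one (h x))

lemma integral_le_csSup_of_forall_mem [IsProbabilityMeasure μ] {f : α → ℝ} {S : Set ℝ}
    (hf : Integrable f μ) (hS : BddAbove S) (hmem : ∀ x, f x ∈ S) :
    ∫ x, f x ∂μ ≤ sSup S :=
  calc ∫ x, f x ∂μ ≤ ∫ _, sSup S ∂μ :=
        integral_mono hf (integrable_const _) fun x => le_csSup hS (hmem x)
    _ = sSup S := by simp

end Integral

theorem sigmoid_surrogate_expectation_general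
    {α : Type*} [MeasurableSpace α]
    (q : Measure α) [IsProbabilityMeasure q]
    (g : α → ℝ)
    (hint : Integrable g q) :
    ((∫ x, max (g x) 0 ∂q)
      = (∫ x, g x * (1 / (1 + exp (-g x))) ∂q)
        + ∫ x, |g x| * (1 / (1 + exp (|g x|))) ∂q) ∧
    ((∫ x, g x * (1 / (1 + exp (-g x))) ∂q) ≤ 0 →
      ((∫ x, max (g x) 0 ∂q) ≤ ∫ x, |g x| * (1 / (1 + exp (|g x|))) ∂q) ∧
      (∫ x, |g x| * (1 / (1 + exp (|g x|))) ∂q)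
        ≤ sSup {v : ℝ | ∃ t : ℝ, 0 ≤ t ∧ v = t / (1 + exp t)}) := by
  have hsurrogate :=
    hint.mul_one_div_one_add_exp (h := fun x => -g x) hint.aestronglyMeasurable.neg
  have hslack :=
    hint.abs.mul_one_div_one_add_exp (h := fun x => |g x|) hint.abs.aestronglyMeasurable
  have hdecomp : (∫ x, max (g x) 0 ∂q)
      = (∫ x, g x * (1 / (1 + exp (-g x))) ∂q)
        + ∫ x, |g x| * (1 / (1 + exp (|g x|))) ∂q := by
    rw [← integral_add hsurrogate hslack]
    exact integral_congr_ae (Filter.Eventually.of_forall fun x =>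
      max_zero_eq_mul_sigmoid_add_abs_mul_sigmoid_neg_abs (g x))
  refine ⟨hdecomp, fun hneg => ⟨by linarith, ?_⟩⟩
  refine integral_le_csSup_of_forall_mem hslack ⟨1, ?_⟩ fun x => ⟨|g x|, abs_nonneg _, ?_⟩
  · rintro _ ⟨t, -, rfl⟩
    exact div_one_add_exp_le_one t
  · rw [mul_one_div]

/-- Surrogate-expectation decomposition: with `σ(u) = 1/(1+e^{-u})`, one has
`E_q[[g]₊] = E_q[g σ(g)] + E_q[|g| σ(-|g|)]`; hence if `E_q[g σ(g)] ≤ 0` and `g`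
is bounded, the true expected violation satisfies
`E_q[[g]₊] ≤ E_q[|g| σ(-|g|)] ≤ sup_{t ≥ 0} t/(1+e^t)`. -/
theorem sigmoid_surrogate_expectation
    {α : Type*} [MeasurableSpace α]
    (q : Measure α) [IsProbabilityMeasure q]
    (g : α → ℝ) (hmeas : Measurable g)
    (hbdd : ∃ B : ℝ, ∀ x, |g x| ≤ B)
    (hint : Integrable g q) :
    ((∫ x, max (g x) 0 ∂q)
      = (∫ x, g x * (1 / (1 + exp (-g x))) ∂q)
        + ∫ x, |g x| * (1 / (1 + exp (|g x|))) ∂q) ∧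
    ((∫ x, g x * (1 / (1 + exp (-g x))) ∂q) ≤ 0 →
      ((∫ x, max (g x) 0 ∂q) ≤ ∫ x, |g x| * (1 / (1 + exp (|g x|))) ∂q) ∧
      (∫ x, |g x| * (1 / (1 + exp (|g x|))) ∂q)
        ≤ sSup {v : ℝ | ∃ t : ℝ, 0 ≤ t ∧ v = t / (1 + exp t)}) :=
  sigmoid_surrogate_expectation_general q g hint
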